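/- arXiv:1104.4847 — 3 statements merged into one kernel-verified Lean document; each statement's English description precedes it below -/
import Mathlib

section
/- For any real numbers c and b with 0 < c < 1 and b ≥ 0, one has [ (2 − c)b + 3 + c + √( (3 + c + bc)² + 4(1 − c)bc ) ] / 2 < b + 4. (With c = λ₁/λ₂ and b = n²H₀²/λ₁, this shows the bound of Theorem 2.1 is strictly smaller than the bound n + √((n²H₀²/λ₁ + 4)²) = n + n²H₀²/λ₁ + 4 of Chen and Cheng.) -/
theorem sqrt_sq_add_mul_lt_add_sub {c u : ℝ} (hc : c < 1) (hu : 0 ≤ u) :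
    √((3 + c + u) ^ 2 + 4 * (1 - c) * u) < u + 5 - c := by
  rw [Real.sqrt_lt' (by linarith)]
  linarith [show (u + 5 - c) ^ 2 = (3 + c + u) ^ 2 + 4 * (1 - c) * u + 16 * (1 - c) by ring]

/-- Remark 2.1 of Cheng–Qi.
For real numbers `c`, `b` with `0 < c < 1` and `b ≥ 0` (in the paper, `c = λ₁/λ₂` and
`b = n²H₀²/λ₁`, so that `b·c = n²H₀²/λ₂`), one has
`[(2−c)b + 3 + c + √((3+c+bc)² + 4(1−c)bc)]/2 < b + 4`. -/
theorem algebraic_bound_strictly_smaller (c b : ℝ) (hc0 : 0 < c) (hc1 : c < 1) (hb : 0 ≤ b) :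
    ((2 - c) * b + 3 + c + Real.sqrt ((3 + c + b * c) ^ 2 + 4 * (1 - c) * (b * c))) / 2
      < b + 4 := by
  -- with the square root replaced by `b * c + 5 - c` the left side is exactly `b + 4`
  have h := sqrt_sq_add_mul_lt_add_sub hc1 (mul_nonneg hb hc0.le)
  linarith
end

section
/- For any real t > 1/2, Σ_{α=1}^{N} (λ_{α+1} − λ₁) ∫_Ω |∇z_α|² u₁^{t+1} ≥ ( Σ_{j=1}^{n} (λ_{j+1} − λ₁) ) ∫_Ω u₁^{t+1}. -/
open MeasureTheory Finset

/- Bathtub principle: the weights `a α ∈ [0, 1]` of total mass `n` are at worst spread over the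
`n` smallest coefficients. Against `c n`, every term of
`∑ (c α - c n) * (a α - 1_{α ≤ n})` is a product of two factors of the same sign. -/
theorem sum_Icc_le_sum_mul_of_monotone {c : ℕ → ℝ} (hc : Monotone c) {n N : ℕ} {a : ℕ → ℝ}
    (ha0 : ∀ α ∈ Icc 1 N, 0 ≤ a α) (ha1 : ∀ α ∈ Icc 1 N, a α ≤ 1)
    (hsum : ∑ α ∈ Icc 1 N, a α = n) :
    ∑ j ∈ Icc 1 n, c j ≤ ∑ α ∈ Icc 1 N, c α * a α := by
  have hnN : n ≤ N := by
    have : ∑ α ∈ Icc 1 N, a α ≤ ∑ α ∈ Icc 1 N, (1 : ℝ) := sum_le_sum ha1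
    simp only [hsum, sum_const, Nat.card_Icc, add_tsub_cancel_right, nsmul_eq_mul,
      mul_one] at this
    exact_mod_cast this
  set ind : ℕ → ℝ := fun α => if α ≤ n then 1 else 0
  have hfilter : (Icc 1 N).filter (· ≤ n) = Icc 1 n := by
    ext α; simp only [mem_filter, mem_Icc]; omega
  have hind : ∑ α ∈ Icc 1 N, c α * ind α = ∑ j ∈ Icc 1 n, c j := by
    simp only [ind, mul_ite, mul_one, mul_zero, ← sum_filter, hfilter]
  have hind_card : ∑ α ∈ Icc 1 N, ind α = n := by
    simp only [ind, ← sum_filter, hfilter, sum_const, Nat.card_Icc, add_tsub_cancel_right,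
      nsmul_eq_mul, mul_one]
  have hterm : ∀ α ∈ Icc 1 N, 0 ≤ (c α - c n) * (a α - ind α) := by
    intro α hα
    by_cases hαn : α ≤ n
    · simp only [ind, if_pos hαn]
      exact mul_nonneg_of_nonpos_of_nonpos (sub_nonpos.2 (hc hαn)) (sub_nonpos.2 (ha1 α hα))
    · simp only [ind, if_neg hαn, sub_zero]
      exact mul_nonneg (sub_nonneg.2 (hc (by omega))) (ha0 α hα)
  have hexpand : ∑ α ∈ Icc 1 N, (c α - c n) * (a α - ind α) =
      ∑ α ∈ Icc 1 N, c α * a α - ∑ j ∈ Icc 1 n, c j := by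
    simp only [sub_mul, mul_sub, sum_sub_distrib, ← mul_sum, hsum, hind_card, hind]
    ring
  linarith [sum_nonneg hterm]

theorem weighted_gradient_sum_lower_bound_general
    (n N : ℕ)
    (Ω : Type*) [MeasureSpace Ω]
    (lam : ℕ → ℝ)
    (hmono : ∀ i j, 1 ≤ i → i ≤ j → lam i ≤ lam j)
    (u1 : Ω → ℝ) (hu1 : ∀ x, 0 < u1 x)
    (t : ℝ)
    (gz : ℕ → Ω → ℝ)
    (hgz0 : ∀ α x, 0 ≤ gz α x) (hgz1 : ∀ α x, gz α x ≤ 1)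
    (hgzsum : ∀ x, ∑ α ∈ Finset.Icc 1 N, gz α x = n)
    (hint : ∀ α, Integrable (fun x => gz α x * u1 x ^ (t + 1)))
    (hint' : Integrable (fun x => u1 x ^ (t + 1))) :
    ∑ α ∈ Finset.Icc 1 N, (lam (α + 1) - lam 1) * ∫ x, gz α x * u1 x ^ (t + 1) ≥
      (∑ j ∈ Finset.Icc 1 n, (lam (j + 1) - lam 1)) * ∫ x, u1 x ^ (t + 1) := by
  have hgap : Monotone fun α => lam (α + 1) - lam 1 := fun i j hij =>
    sub_le_sub_right (hmono _ _ (by omega) (by omega)) _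
  have hpointwise : ∀ x, (∑ j ∈ Icc 1 n, (lam (j + 1) - lam 1)) * u1 x ^ (t + 1) ≤
      ∑ α ∈ Icc 1 N, (lam (α + 1) - lam 1) * (gz α x * u1 x ^ (t + 1)) := fun x => by
    simp only [← mul_assoc, ← sum_mul]
    exact mul_le_mul_of_nonneg_right
      (sum_Icc_le_sum_mul_of_monotone hgap (fun α _ => hgz0 α x) (fun α _ => hgz1 α x)
        (hgzsum x))
      (Real.rpow_nonneg (hu1 x).le _)
  have hint_weighted : ∀ α ∈ Icc 1 N, Integrable fun x => (lam (α + 1) - lam 1) *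
      (gz α x * u1 x ^ (t + 1)) := fun α _ => (hint α).const_mul _
  calc (∑ j ∈ Icc 1 n, (lam (j + 1) - lam 1)) * ∫ x, u1 x ^ (t + 1)
      = ∫ x, (∑ j ∈ Icc 1 n, (lam (j + 1) - lam 1)) * u1 x ^ (t + 1) :=
        (integral_const_mul _ _).symm
    _ ≤ ∫ x, ∑ α ∈ Icc 1 N, (lam (α + 1) - lam 1) * (gz α x * u1 x ^ (t + 1)) :=
        integral_mono (hint'.const_mul _) (integrable_finsetSum _ hint_weighted) hpointwise
    _ = ∑ α ∈ Icc 1 N, (lam (α + 1) - lam 1) * ∫ x, gz α x * u1 x ^ (t + 1) := by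
        rw [integral_finsetSum _ hint_weighted]
        simp only [integral_const_mul]

/-- inequality (2.12) of Cheng–Qi.
Setting: `Ω` is a bounded domain in an `n`-dimensional complete Riemannian manifold
isometrically immersed in `ℝ^N`, `lam j` its Dirichlet eigenvalues
(`0 < λ₁ < λ₂ ≤ λ₃ ≤ ⋯`), `u1` the first eigenfunction (`u1 > 0` in `Ω`), and
`gz α = |∇z_α|²` for the translated rotated coordinate functions `z_α`; these satisfy
`0 ≤ |∇z_α|² ≤ 1` and `Σ_{α=1}^N |∇z_α|² = n` pointwise.
Conclusion: for any real `t > 1/2`,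
`Σ_{α=1}^N (λ_{α+1} − λ₁)∫_Ω |∇z_α|²u₁^{t+1} ≥ (Σ_{j=1}^n (λ_{j+1} − λ₁))∫_Ω u₁^{t+1}`. -/
theorem weighted_gradient_sum_lower_bound
    (n N : ℕ) (hn : 1 ≤ n) (hnN : n ≤ N)
    (Ω : Type*) [MeasureSpace Ω]
    (lam : ℕ → ℝ) (hlam1 : 0 < lam 1) (hlam12 : lam 1 < lam 2)
    (hmono : ∀ i j, 1 ≤ i → i ≤ j → lam i ≤ lam j)
    (u1 : Ω → ℝ) (hu1 : ∀ x, 0 < u1 x)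
    (t : ℝ) (ht : 1 / 2 < t)
    (gz : ℕ → Ω → ℝ)
    (hgz0 : ∀ α x, 0 ≤ gz α x) (hgz1 : ∀ α x, gz α x ≤ 1)
    (hgzsum : ∀ x, ∑ α ∈ Finset.Icc 1 N, gz α x = n)
    (hint : ∀ α, Integrable (fun x => gz α x * u1 x ^ (t + 1)))
    (hint' : Integrable (fun x => u1 x ^ (t + 1))) :
    ∑ α ∈ Finset.Icc 1 N, (lam (α + 1) - lam 1) * ∫ x, gz α x * u1 x ^ (t + 1) ≥
      (∑ j ∈ Finset.Icc 1 n, (lam (j + 1) - lam 1)) * ∫ x, u1 x ^ (t + 1) :=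
  weighted_gradient_sum_lower_bound_general n N Ω lam hmono u1 hu1 t gz hgz0 hgz1 hgzsum hint hint'
end

section
/- Let a > 1 and b ≥ 0 be real numbers and define f(t) = ( b(2t − 1) + (1 + t)² ) / ( a(2t − 1) − t² ). Then the minimum of f over the interval [1, a + √(a² − a)) is attained at t₀ = ( a + b − 1 + √( (a + b − 1)² + 8a(a + b + 1) ) ) / ( 2(a + b + 1) ), which satisfies 1 < t₀ < a + √(a² − a), and f(t₀) = ( (2a − 1)b + 3a + 1 + √( (a + b − 1)² + 8a(a + b + 1) ) ) / ( 2a(a − 1) ). -/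
/-!
Write `f = N / D` and let `m` be the claimed minimum value. Because `t₀` is the positive root of
`(a + b + 1) t² − (a + b − 1) t − 2a`, the quadratic `N − m D` has a double root at `t₀`, so
`N(t) − m D(t) = (1 + m) (t − t₀)² ≥ 0`. Hence `f ≥ m` wherever `D > 0`, with equality at `t₀`.
Moreover `D(t) = (a² − a) − (t − a)²`, which is positive on `[1, a + √(a² − a))`.
-/

open Real

lemma denom_pos_iff_lt_add_sqrt {a t : ℝ} (ha : 1 < a) (ht : 1 ≤ t) :
    0 < a * (2 * t - 1) - t ^ 2 ↔ t < a + √(a ^ 2 - a) := by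
  set r := √(a ^ 2 - a)
  have hr2 : r ^ 2 = a ^ 2 - a := sq_sqrt (by nlinarith)
  have hr : a - 1 < r := lt_sqrt_of_sq_lt (by nlinarith)
  have hfactor : a * (2 * t - 1) - t ^ 2 = (a + r - t) * (t - a + r) := by
    linear_combination -hr2
  rw [hfactor, mul_pos_iff_of_pos_right (by linarith), sub_pos]

lemma add_three_lt_sqrt_discr {a b : ℝ} (ha : 1 < a) (hb : 0 ≤ b) :
    a + b + 3 < √((a + b - 1) ^ 2 + 8 * a * (a + b + 1)) :=
  lt_sqrt_of_sq_lt (by nlinarith)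

lemma quadratic_root_of_sqrt_discr {a c q s t : ℝ} (hq : q ≠ 0)
    (hs : s = 2 * q * t - c) (hs2 : s ^ 2 = c ^ 2 + 8 * a * q) :
    q * t ^ 2 - c * t - 2 * a = 0 := by
  have h : 4 * q * (q * t ^ 2 - c * t - 2 * a) = 0 := by
    rw [hs] at hs2
    linear_combination hs2
  simpa [hq] using h

lemma numer_sub_denom_eq_mul_sq {a b s t₀ : ℝ} (hs : s = 2 * (a + b + 1) * t₀ - (a + b - 1))
    (hroot : (a + b + 1) * t₀ ^ 2 - (a + b - 1) * t₀ - 2 * a = 0) (t : ℝ) :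
    2 * a * (a - 1) * (b * (2 * t - 1) + (1 + t) ^ 2)
        - ((2 * a - 1) * b + 3 * a + 1 + s) * (a * (2 * t - 1) - t ^ 2)
      = (2 * a * (a - 1) + ((2 * a - 1) * b + 3 * a + 1 + s)) * (t - t₀) ^ 2 := by
  subst hs
  linear_combination (4 * t - 2 * t₀ - 2 * a) * hroot

/-- minimization of `f(t)` in the proof of Theorem 2.1 of Cheng–Qi.
For real `a > 1`, `b ≥ 0`, let `f(t) = (b(2t−1) + (1+t)²)/(a(2t−1) − t²)` and
`t₀ = (a + b − 1 + √((a+b−1)² + 8a(a+b+1)))/(2(a+b+1))`.  Then `1 < t₀ < a + √(a² − a)`,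
`f` attains its minimum over `[1, a + √(a² − a))` at `t₀`, and
`f(t₀) = ((2a−1)b + 3a + 1 + √((a+b−1)² + 8a(a+b+1)))/(2a(a−1))`. -/
theorem f_min_at_t0
    (a b : ℝ) (ha : 1 < a) (hb : 0 ≤ b)
    (f : ℝ → ℝ)
    (hf : ∀ t, f t = (b * (2 * t - 1) + (1 + t) ^ 2) / (a * (2 * t - 1) - t ^ 2))
    (t0 : ℝ)
    (ht0 : t0 = (a + b - 1 + Real.sqrt ((a + b - 1) ^ 2 + 8 * a * (a + b + 1))) /
      (2 * (a + b + 1))) :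
    1 < t0 ∧ t0 < a + Real.sqrt (a ^ 2 - a) ∧
    (∀ t ∈ Set.Ico (1 : ℝ) (a + Real.sqrt (a ^ 2 - a)), f t0 ≤ f t) ∧
    f t0 = ((2 * a - 1) * b + 3 * a + 1 +
      Real.sqrt ((a + b - 1) ^ 2 + 8 * a * (a + b + 1))) / (2 * a * (a - 1)) := by
  set s := √((a + b - 1) ^ 2 + 8 * a * (a + b + 1))
  have hq : 0 < a + b + 1 := by linarith
  have hs : s = 2 * (a + b + 1) * t0 - (a + b - 1) := by
    rw [ht0]; field_simp; ring
  have hroot := quadratic_root_of_sqrt_discr hq.ne' hs (sq_sqrt (by positivity))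
  have hid := numer_sub_denom_eq_mul_sq hs hroot
  have hgt : 1 < t0 := by nlinarith [add_three_lt_sqrt_discr ha hb]
  have hk : 0 < 2 * a * (a - 1) := by nlinarith
  have hM : 0 < (2 * a - 1) * b + 3 * a + 1 + s := by nlinarith [sqrt_nonneg ((a + b - 1) ^ 2 + 8 * a * (a + b + 1))]
  have hD0 : 0 < a * (2 * t0 - 1) - t0 ^ 2 := by
    have hN0 : 0 < b * (2 * t0 - 1) + (1 + t0) ^ 2 := by nlinarith
    nlinarith [hid t0]
  have hval : f t0 = ((2 * a - 1) * b + 3 * a + 1 + s) / (2 * a * (a - 1)) := by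
    rw [hf, div_eq_div_iff hD0.ne' hk.ne']
    linarith [hid t0]
  refine ⟨hgt, (denom_pos_iff_lt_add_sqrt ha hgt.le).1 hD0, fun t ht => ?_, hval⟩
  rw [hval, hf, div_le_div_iff₀ hk ((denom_pos_iff_lt_add_sqrt ha ht.1).2 ht.2)]
  nlinarith [hid t, mul_nonneg (add_pos hk hM).le (sq_nonneg (t - t0))]
end
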